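/- A single data checkpoint C^i_x belongs to some consistent global checkpoint if and only if there is no dependence path from C^i_x to itself (i.e., ¬(C^i_x DP→ C^i_x)). -/
import Mathlib


/-- A dependence edge between checkpoint intervals of data objects:
it starts in interval `I^{srcIdx}_{src}` and arrives in interval `I^{dstIdx}_{dst}`. -/
structure DepEdge (Obj : Type) where
  src : Obj
  srcIdx : ℕ
  dst : Obj
  dstIdx : ℕ

/-- Dependence path (Z-path) from checkpoint `C^i_x` to checkpoint `C^j_y`:
either same object with smaller index, or a sequence of dependence edges where
the first starts after `C^i_x`, each next edge starts in the same or a later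
interval of the object where the previous arrives, and the last arrives before `C^j_y`. -/
def DP {Obj : Type} (E : Set (DepEdge Obj)) (x : Obj) (i : ℕ) (y : Obj) (j : ℕ) : Prop :=
  (x = y ∧ i < j) ∨
  ∃ r : ℕ, ∃ d : Fin (r + 1) → DepEdge Obj,
    (∀ q, d q ∈ E) ∧
    (d 0).src = x ∧ i ≤ (d 0).srcIdx ∧
    (∀ q : Fin r, (d q.succ).src = (d q.castSucc).dst ∧
      (d q.castSucc).dstIdx ≤ (d q.succ).srcIdx) ∧
    (d (Fin.last r)).dst = y ∧ (d (Fin.last r)).dstIdx < j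

/-- A global checkpoint `G` (one checkpoint index per object) is consistent iff
no dependence edge starts after a member checkpoint and arrives before a member
checkpoint. -/
def ConsistentGC {Obj : Type} (E : Set (DepEdge Obj)) (G : Obj → ℕ) : Prop :=
  ∀ e ∈ E, ¬ (G e.src ≤ e.srcIdx ∧ e.dstIdx < G e.dst)

lemma dp_mono {Obj : Type} {E : Set (DepEdge Obj)} {x y : Obj} {i j j' : ℕ}
    (h : DP E x i y j) (hj : j ≤ j') : DP E x i y j' := by
  rcases h with ⟨hxy, hij⟩ | ⟨r, d, hm, h0, hi0, hc, hl, hlt⟩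
  · exact Or.inl ⟨hxy, lt_of_lt_of_le hij hj⟩
  · exact Or.inr ⟨r, d, hm, h0, hi0, hc, hl, lt_of_lt_of_le hlt hj⟩

lemma dp_snoc {Obj : Type} {E : Set (DepEdge Obj)} {x y : Obj} {i k : ℕ}
    {e : DepEdge Obj} (h : DP E x i y (k + 1)) (he : e ∈ E) (hs : e.src = y)
    (hk : k ≤ e.srcIdx) : DP E x i e.dst (e.dstIdx + 1) := by
  rcases h with ⟨hxy, hij⟩ | ⟨r, d, hm, h0, hi0, hc, hl, hlt⟩
  · refine Or.inr ⟨0, fun _ => e, fun _ => he, ?_, ?_, ?_, rfl, Nat.lt_succ_self _⟩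
    · rw [hs, ← hxy]
    · exact le_trans (Nat.lt_succ_iff.mp hij) hk
    · exact fun q => q.elim0
  · refine Or.inr ⟨r + 1, Fin.snoc d e, ?_, ?_, ?_, ?_, ?_, ?_⟩
    · intro q
      induction q using Fin.lastCases with
      | last => simpa using he
      | cast p => simpa using hm p
    · have : (0 : Fin (r + 2)) = Fin.castSucc 0 := rfl
      rw [this, Fin.snoc_castSucc]; exact h0
    · have : (0 : Fin (r + 2)) = Fin.castSucc 0 := rfl
      rw [this, Fin.snoc_castSucc]; exact hi0
    · intro q
      induction q using Fin.lastCases with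
      | last =>
        have h1 : (Fin.last (r + 1) : Fin (r + 2)) = (Fin.last r).succ := by
          simp [Fin.succ_last]
        rw [← h1]
        simp only [Fin.snoc_last, Fin.snoc_castSucc]
        exact ⟨hs.trans hl.symm, le_trans (Nat.le_of_lt_succ hlt) hk⟩
      | cast p =>
        have h1 : (p.castSucc).succ = (p.succ).castSucc := Fin.succ_castSucc p
        rw [h1]
        simp only [Fin.snoc_castSucc]
        exact hc p
    · simp
    · simp
/-- corollary: a single checkpoint C^i_x belongs to some
consistent global checkpoint iff it has no dependence path to itself. -/
theorem stmt6 {Obj : Type} [Fintype Obj] (E : Set (DepEdge Obj)) (hE : E.Finite)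
    (x : Obj) (i : ℕ) :
    (∃ G : Obj → ℕ, ConsistentGC E G ∧ G x = i) ↔ ¬ DP E x i x i := by
  constructor
  · rintro ⟨G, hG, hGx⟩ hdp
    rcases hdp with ⟨_, hlt⟩ | ⟨r, d, hm, h0, hi0, hc, hl, hlt⟩
    · exact lt_irrefl i hlt
    · have key : ∀ q : Fin (r + 1), G (d q).dst ≤ (d q).dstIdx := by
        intro q
        induction q using Fin.induction with
        | zero =>
          have := hG (d 0) (hm 0)
          rw [h0] at this
          omega
        | succ p ih =>
          obtain ⟨hsrc, hidx⟩ := hc p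
          have := hG (d p.succ) (hm p.succ)
          rw [hsrc] at this
          omega
      have := key (Fin.last r)
      rw [hl] at this
      omega
  · intro hnd
    classical
    set N : ℕ := hE.toFinset.sup (fun e => e.srcIdx) + 1 with hN
    set G : Obj → ℕ := fun y =>
      if h : ∃ k, DP E x i y k then sInf {k | DP E x i y k} - 1 else N with hGdef
    have hreach : ∀ y k, DP E x i y k → (∃ k', DP E x i y k') ∧ G y ≤ k - 1 := by
      intro y k hk
      have hne : ∃ k, DP E x i y k := ⟨k, hk⟩
      refine ⟨hne, ?_⟩
      simp only [hGdef, dif_pos hne]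
      exact Nat.sub_le_sub_right (Nat.sInf_le hk) 1
    have hGx : G x = i := by
      have hdpx : DP E x i x (i + 1) := Or.inl ⟨rfl, Nat.lt_succ_self i⟩
      have hne : ∃ k, DP E x i x k := ⟨i + 1, hdpx⟩
      have hmem : sInf {k | DP E x i x k} ∈ {k | DP E x i x k} := Nat.sInf_mem ⟨_, hdpx⟩
      have hge : i + 1 ≤ sInf {k | DP E x i x k} := by
        by_contra hc
        exact hnd (dp_mono hmem (by omega))
      have hle : sInf {k | DP E x i x k} ≤ i + 1 := Nat.sInf_le hdpx
      simp only [hGdef, dif_pos hne]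
      omega
    refine ⟨G, ?_, hGx⟩
    rintro e he ⟨h1, h2⟩
    have hsrc : ∃ k, DP E x i e.src k := by
      by_contra hn
      have : G e.src = N := by simp only [hGdef, dif_neg hn]
      have : e.srcIdx < N := by
        have : e.srcIdx ≤ hE.toFinset.sup (fun e => e.srcIdx) :=
          Finset.le_sup (by simpa using he)
        omega
      omega
    have hmem : sInf {k | DP E x i e.src k} ∈ {k | DP E x i e.src k} :=
      Nat.sInf_mem ⟨_, hsrc.choose_spec⟩
    have hG1 : G e.src = sInf {k | DP E x i e.src k} - 1 := by
      simp only [hGdef, dif_pos hsrc]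
    have hdp : DP E x i e.src (e.srcIdx + 1) := dp_mono hmem (by omega)
    have hdst := dp_snoc hdp he rfl (le_refl _)
    have := (hreach e.dst _ hdst).2
    omega
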